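/- arXiv:1604.01172 — 4 statements merged into one kernel-verified Lean document; each statement's English description precedes it below -/
import Mathlib

section
/- For every b ∈ ℝ and all real numbers u, t with 0 < u < t, the following integral identity holds: (e^{−b²u/2}/√(2πu)) · ∫_ℝ e^{−by − b²(t−u)/2} · (|y|/√(2π(t−u)³)) · e^{−y²/(2(t−u))} dy = ψ_t(u), where ψ_t(u) = (e^{−b²u/2}/(π√(u(t−u)))) · [ e^{−b²(t−u)/2} + (b/2)·√(2π(t−u)) · (2Φ(b√(t−u)) − 1) ]. (This is the closed-form evaluation, in Lemma 1, of Salminen's formula for the density of the last passage time of Brownian motion before time t through the linear boundary a + bt; note that the result does not depend on a.) -/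
open Real MeasureTheory Set Filter

/-- Standard Gaussian density φ(z) = (1/√(2π)) e^{−z²/2}. -/
noncomputable def gaussPdf (z : ℝ) : ℝ := (1 / Real.sqrt (2 * π)) * Real.exp (-z ^ 2 / 2)

/-- Standard Gaussian distribution function Φ(y) = ∫_{−∞}^y φ(z) dz. -/
noncomputable def gaussCdf (y : ℝ) : ℝ := ∫ z in Set.Iio y, gaussPdf z

/-- ψ_t(u) = (e^{−b²u/2}/(π√(u(t−u)))) · [ e^{−b²(t−u)/2}
      + (b/2)·√(2π(t−u)) · (2Φ(b√(t−u)) − 1) ]. -/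
noncomputable def psi (b t u : ℝ) : ℝ :=
  (Real.exp (-b ^ 2 * u / 2) / (π * Real.sqrt (u * (t - u)))) *
    (Real.exp (-b ^ 2 * (t - u) / 2) +
      (b / 2) * Real.sqrt (2 * π * (t - u)) *
        (2 * gaussCdf (b * Real.sqrt (t - u)) - 1))

/-- Inverse Gaussian first-passage density f_{τ₁}(t) = (|a−x|/t^{3/2}) φ((a+bt−x)/√t). -/
noncomputable def invGaussPdf (a x b t : ℝ) : ℝ :=
  (|a - x| / t ^ ((3 : ℝ) / 2)) * gaussPdf ((a + b * t - x) / Real.sqrt t)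

/-!
Completing the square, `e^{-by - b²s/2} e^{-y²/(2s)} = e^{-(y + bs)²/(2s)}`, turns the integral
into the mean absolute deviation `∫ |z - m| e^{-z²/(2s)} dz` about `m = bs` of a centred Gaussian.
Splitting at `m` and reflecting the left half reduces it to two integrals
`∫_a^∞ (z - a) e^{-z²/(2s)} dz = s e^{-a²/(2s)} - a √(2πs) Φ(-a/√s)` with `a = ±m`, whose sum is
`2s e^{-b²s/2} + bs √(2πs) (2Φ(b√s) - 1)`; the prefactors then assemble into `ψ_t(u)`.
-/

lemma exp_neg_sq_div_eq (s z : ℝ) : exp (-z ^ 2 / (2 * s)) = exp (-(2 * s)⁻¹ * z ^ 2) := by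
  congr 1; ring

lemma integrable_exp_neg_sq_div {s : ℝ} (hs : 0 < s) :
    Integrable fun z : ℝ => exp (-z ^ 2 / (2 * s)) := by
  simpa only [exp_neg_sq_div_eq] using integrable_exp_neg_mul_sq (by positivity : 0 < (2 * s)⁻¹)

lemma integrable_mul_exp_neg_sq_div {s : ℝ} (hs : 0 < s) :
    Integrable fun z : ℝ => z * exp (-z ^ 2 / (2 * s)) := by
  simpa only [exp_neg_sq_div_eq] using
    integrable_mul_exp_neg_mul_sq (by positivity : 0 < (2 * s)⁻¹)

lemma integrable_abs_sub_mul_exp_neg_sq_div {s : ℝ} (hs : 0 < s) (m : ℝ) :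
    Integrable fun z : ℝ => |z - m| * exp (-z ^ 2 / (2 * s)) := by
  refine ((integrable_mul_exp_neg_sq_div hs).abs.add
    ((integrable_exp_neg_sq_div hs).const_mul |m|)).mono' (by fun_prop) ?_
  filter_upwards with z
  simp only [Pi.add_apply, norm_mul, norm_abs_eq_norm, norm_of_nonneg (exp_pos _).le, abs_mul,
    abs_of_pos (exp_pos _), ← add_mul]
  exact mul_le_mul_of_nonneg_right (norm_sub_le z m) (exp_pos _).le

lemma integral_Iic_exp_neg_sq_div_two (c : ℝ) :
    ∫ x in Iic c, exp (-x ^ 2 / 2) = √(2 * π) * gaussCdf c := by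
  rw [gaussCdf, setIntegral_congr_set Iio_ae_eq_Iic]
  simp only [gaussPdf, integral_const_mul]
  field_simp

lemma integral_Ioi_exp_neg_sq_div_two (c : ℝ) :
    ∫ x in Ioi c, exp (-x ^ 2 / 2) = √(2 * π) * gaussCdf (-c) := by
  have h := integral_comp_neg_Ioi c fun x => exp (-x ^ 2 / 2)
  simp only [neg_sq] at h
  rw [h, integral_Iic_exp_neg_sq_div_two]

lemma integral_exp_neg_sq_div_two : ∫ x : ℝ, exp (-x ^ 2 / 2) = √(2 * π) := by
  have h := integral_gaussian (1 / 2)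
  rw [show π / (1 / 2) = 2 * π by ring] at h
  rw [← h]
  congr 1 with x
  congr 1
  ring

lemma gaussCdf_neg (c : ℝ) : gaussCdf (-c) = 1 - gaussCdf c := by
  have h := intervalIntegral.integral_Iic_add_Ioi (b := c)
    (integrable_exp_neg_sq_div one_pos).integrableOn
    (integrable_exp_neg_sq_div one_pos).integrableOn
  simp only [mul_one] at h
  rw [integral_exp_neg_sq_div_two, integral_Ioi_exp_neg_sq_div_two,
    integral_Iic_exp_neg_sq_div_two, ← mul_add] at h
  have hpos : (0 : ℝ) < √(2 * π) := by positivity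
  linarith [mul_left_cancel₀ hpos.ne' (h.trans (mul_one _).symm)]

lemma integral_Ioi_exp_neg_sq_div {s : ℝ} (hs : 0 < s) (a : ℝ) :
    ∫ z in Ioi a, exp (-z ^ 2 / (2 * s)) = √(2 * π * s) * gaussCdf (-(a / √s)) := by
  have hsq : 0 < √s := sqrt_pos.mpr hs
  have h := integral_comp_mul_left_Ioi' (fun z => exp (-z ^ 2 / (2 * s))) (a / √s) hsq
  rw [mul_div_cancel₀ a hsq.ne'] at h
  have hscale (x : ℝ) : -(√s * x) ^ 2 / (2 * s) = -x ^ 2 / 2 := by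
    rw [mul_pow, sq_sqrt hs.le]; field_simp
  simp only [hscale, integral_Ioi_exp_neg_sq_div_two, smul_eq_mul] at h
  rw [← h, sqrt_mul (by positivity) s]
  ring

lemma integral_Ioi_mul_exp_neg_sq_div {s : ℝ} (hs : 0 < s) (a : ℝ) :
    ∫ z in Ioi a, z * exp (-z ^ 2 / (2 * s)) = s * exp (-a ^ 2 / (2 * s)) := by
  have hderiv (x : ℝ) : HasDerivAt (fun z => -s * exp (-z ^ 2 / (2 * s)))
      (x * exp (-x ^ 2 / (2 * s))) x := by
    have hexponent : HasDerivAt (fun z : ℝ => -z ^ 2 / (2 * s)) (-(2 * x) / (2 * s)) x := by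
      simpa using (hasDerivAt_pow 2 x).neg.div_const (2 * s)
    refine (hexponent.exp.const_mul (-s)).congr_deriv ?_
    field_simp
  have hlim : Tendsto (fun z => -s * exp (-z ^ 2 / (2 * s))) atTop (nhds 0) := by
    have h := (tendsto_neg_atTop_atBot.comp (tendsto_pow_atTop two_ne_zero)).atBot_div_const
      (by positivity : 0 < 2 * s)
    simpa using (tendsto_exp_atBot.comp h).const_mul (-s)
  rw [integral_Ioi_of_hasDerivAt_of_tendsto' (fun x _ => hderiv x)
    (integrable_mul_exp_neg_sq_div hs).integrableOn hlim]
  ring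

lemma integral_Ioi_abs_sub_mul_exp_neg_sq_div {s : ℝ} (hs : 0 < s) (a : ℝ) :
    ∫ z in Ioi a, |z - a| * exp (-z ^ 2 / (2 * s))
      = s * exp (-a ^ 2 / (2 * s)) - a * (√(2 * π * s) * gaussCdf (-(a / √s))) := by
  have h : ∫ z in Ioi a, |z - a| * exp (-z ^ 2 / (2 * s))
      = ∫ z in Ioi a, (z * exp (-z ^ 2 / (2 * s)) - a * exp (-z ^ 2 / (2 * s))) :=
    setIntegral_congr_fun measurableSet_Ioi fun z hz => by
      rw [abs_of_pos (sub_pos.mpr hz)]; ring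
  rw [h, integral_sub (integrable_mul_exp_neg_sq_div hs).integrableOn
      ((integrable_exp_neg_sq_div hs).const_mul a).integrableOn,
    integral_const_mul, integral_Ioi_mul_exp_neg_sq_div hs, integral_Ioi_exp_neg_sq_div hs]

lemma integral_abs_sub_mul_exp_neg_sq_div {s : ℝ} (hs : 0 < s) (m : ℝ) :
    ∫ z, |z - m| * exp (-z ^ 2 / (2 * s))
      = 2 * s * exp (-m ^ 2 / (2 * s)) + m * √(2 * π * s) * (2 * gaussCdf (m / √s) - 1) := by
  have hint := integrable_abs_sub_mul_exp_neg_sq_div hs m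
  have hreflect : ∫ z in Iic m, |z - m| * exp (-z ^ 2 / (2 * s))
      = ∫ z in Ioi (-m), |z - -m| * exp (-z ^ 2 / (2 * s)) := by
    have h := integral_comp_neg_Ioi (-m) fun z => |z - m| * exp (-z ^ 2 / (2 * s))
    rw [neg_neg] at h
    rw [← h]
    congr 1 with z
    rw [neg_sq, ← abs_neg]
    ring_nf
  rw [← intervalIntegral.integral_Iic_add_Ioi hint.integrableOn hint.integrableOn, hreflect,
    integral_Ioi_abs_sub_mul_exp_neg_sq_div hs, integral_Ioi_abs_sub_mul_exp_neg_sq_div hs]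
  simp only [neg_div, neg_neg, neg_sq, gaussCdf_neg]
  ring

lemma integral_exp_mul_abs_div_mul_exp_neg_sq_div {s : ℝ} (hs : s ≠ 0) (b c : ℝ) :
    ∫ y, exp (-b * y - b ^ 2 * s / 2) * (|y| / c) * exp (-y ^ 2 / (2 * s))
      = (∫ z, |z - b * s| * exp (-z ^ 2 / (2 * s))) / c := by
  rw [← integral_add_right_eq_self (fun z => |z - b * s| * exp (-z ^ 2 / (2 * s))) (b * s),
    ← integral_div]
  congr 1 with y
  have hsquare : exp (-b * y - b ^ 2 * s / 2) * exp (-y ^ 2 / (2 * s))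
      = exp (-(y + b * s) ^ 2 / (2 * s)) := by
    rw [← exp_add]; congr 1; field_simp; ring
  rw [add_sub_cancel_right, ← hsquare]
  ring

theorem stmt0 (b u t : ℝ) (hu : 0 < u) (hut : u < t) :
    (Real.exp (-b ^ 2 * u / 2) / Real.sqrt (2 * π * u)) *
      (∫ y : ℝ, Real.exp (-b * y - b ^ 2 * (t - u) / 2) *
        (|y| / Real.sqrt (2 * π * (t - u) ^ 3)) * Real.exp (-y ^ 2 / (2 * (t - u))))
      = psi b t u := by
  set s := t - u with hs_def
  have hs : 0 < s := sub_pos.mpr hut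
  rw [integral_exp_mul_abs_div_mul_exp_neg_sq_div hs.ne', integral_abs_sub_mul_exp_neg_sq_div hs]
  have hcdf_arg : b * s / √s = b * √s := by rw [mul_div_assoc, div_sqrt]
  have hexp : exp (-(b * s) ^ 2 / (2 * s)) = exp (-b ^ 2 * s / 2) := by
    congr 1; field_simp
  have hcube : √(2 * π * s ^ 3) = s * √(2 * π * s) := by
    rw [show 2 * π * s ^ 3 = s ^ 2 * (2 * π * s) by ring, sqrt_mul (by positivity),
      sqrt_sq hs.le]
  have hprod : √(u * s) = √(2 * π * u) * √(2 * π * s) / (2 * π) := by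
    rw [eq_div_iff (by positivity), ← sqrt_mul (by positivity),
      show 2 * π * u * (2 * π * s) = u * s * (2 * π) ^ 2 by ring,
      sqrt_mul (by positivity : 0 ≤ u * s), sqrt_sq (by positivity)]
  have hsqrt_u : 0 < √(2 * π * u) := by positivity
  have hsqrt_s : 0 < √(2 * π * s) := by positivity
  rw [psi, ← hs_def, hexp, hcube, hcdf_arg, hprod]
  field_simp
end

section
/- Fix b ∈ ℝ and s > 0. For every t > 0, the function F(t) = ∫₀^s ψ_{s+t}(y) dy is differentiable at t with derivative F′(t) = − e^{−b²(s+t)/2} · √s / (π·(s+t)·√t). -/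
open Real MeasureTheory Set Filter

/-!
Write `ψ_T(u) = e^{-b²u/2} / (π√u) · g(T - u)` with
`g(w) = e^{-b²w/2} / √w + (b/2) √(2π) (2Φ(b√w) - 1)`. In `g'` the `b²`-terms coming from
the exponential and from `Φ' = φ` cancel, leaving `g'(w) = -e^{-b²w/2} / (2 w^{3/2})`, so
`∂ψ_T(u)/∂T = -e^{-b²T/2} / (2π) · u^{-1/2} (T - u)^{-3/2}`. For `T` near `s + t` this is
dominated by a multiple of `u^{-1/2}`, so we may differentiate under the integral sign, and
`∫₀^s u^{-1/2} (T - u)^{-3/2} du = 2√s / (T √(T - s))` since `2√u / (T √(T - u))` is an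
antiderivative.
-/

open Topology

theorem hasDerivAt_integral_Iio {E : Type*} [NormedAddCommGroup E] [NormedSpace ℝ E]
    [CompleteSpace E] {f : ℝ → E} {x : ℝ} (hf : Integrable f) (hx : ContinuousAt f x) :
    HasDerivAt (fun y => ∫ z in Iio y, f z) (f x) x := by
  have split : ∀ y, ∫ z in Iio y, f z = (∫ z in Iic 0, f z) + ∫ z in (0 : ℝ)..y, f z := by
    intro y
    rw [← integral_Iic_eq_integral_Iio,
      ← intervalIntegral.integral_Iic_sub_Iic hf.integrableOn hf.integrableOn]
    abel
  simp_rw [split]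
  exact (intervalIntegral.integral_hasDerivAt_right hf.intervalIntegrable
    hf.aestronglyMeasurable.stronglyMeasurableAtFilter hx).const_add _

lemma integrable_gaussPdf : Integrable gaussPdf := by
  convert (integrable_exp_neg_mul_sq (b := 1 / 2) (by norm_num)).const_mul (1 / √(2 * π)) using 1
  ext z
  rw [gaussPdf]
  ring_nf

lemma hasDerivAt_gaussCdf (x : ℝ) : HasDerivAt gaussCdf (gaussPdf x) x :=
  hasDerivAt_integral_Iio integrable_gaussPdf (by unfold gaussPdf; fun_prop)

noncomputable def psiFactor (b w : ℝ) : ℝ :=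
  exp (-b ^ 2 * w / 2) / √w + b / 2 * √(2 * π) * (2 * gaussCdf (b * √w) - 1)

lemma psi_eq_mul_psiFactor (b : ℝ) {T u : ℝ} (hu : u < T) :
    psi b T u = exp (-b ^ 2 * u / 2) / (π * √u) * psiFactor b (T - u) := by
  have hw : 0 < √(T - u) := sqrt_pos.2 (sub_pos.2 hu)
  rw [psi, psiFactor, sqrt_mul' u (sub_pos.2 hu).le,
    sqrt_mul (by positivity : (0 : ℝ) ≤ 2 * π)]
  field_simp

lemma hasDerivAt_psiFactor (b : ℝ) {w : ℝ} (hw : 0 < w) :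
    HasDerivAt (psiFactor b) (-exp (-b ^ 2 * w / 2) / 2 * (w * √w)⁻¹) w := by
  have hsqrt : HasDerivAt (fun v => √v) (1 / (2 * √w)) w := hasDerivAt_sqrt hw.ne'
  have hexp : HasDerivAt (fun v => exp (-b ^ 2 * v / 2))
      (exp (-b ^ 2 * w / 2) * (-b ^ 2 / 2)) w := by
    simpa using (((hasDerivAt_id w).const_mul (-b ^ 2)).div_const 2).exp
  have hcdf := (hasDerivAt_gaussCdf (b * √w)).comp w (hsqrt.const_mul b)
  refine ((hexp.div hsqrt (sqrt_pos.2 hw).ne').add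
    (((hcdf.const_mul 2).sub_const 1).const_mul (b / 2 * √(2 * π)))).congr_deriv ?_
  have hw' : √w ^ 2 = w := sq_sqrt hw.le
  unfold gaussPdf
  rw [mul_pow, hw']
  field_simp
  linear_combination -b ^ 2 * hw'

noncomputable def psiDerivKernel (T u : ℝ) : ℝ := (√u)⁻¹ * ((T - u) * √(T - u))⁻¹

lemma hasDerivAt_psi_fst (b : ℝ) {T u : ℝ} (hu : u < T) :
    HasDerivAt (fun T' => psi b T' u)
      (-(exp (-b ^ 2 * T / 2) / (2 * π)) * psiDerivKernel T u) T := by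
  have heq : (fun T' => psi b T' u) =ᶠ[𝓝 T]
      fun T' => exp (-b ^ 2 * u / 2) / (π * √u) * psiFactor b (T' - u) :=
    (eventually_gt_nhds hu).mono fun T' hT' => psi_eq_mul_psiFactor b hT'
  have hfactor := (hasDerivAt_psiFactor b (sub_pos.2 hu)).comp T ((hasDerivAt_id T).sub_const u)
  refine ((hfactor.const_mul (exp (-b ^ 2 * u / 2) / (π * √u))).congr_of_eventuallyEq
    heq).congr_deriv ?_
  have hexp : exp (-b ^ 2 * T / 2) = exp (-b ^ 2 * u / 2) * exp (-b ^ 2 * (T - u) / 2) := by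
    rw [← exp_add]; ring_nf
  rw [hexp, psiDerivKernel]
  simp only [mul_one]
  ring

lemma intervalIntegrable_inv_sqrt {s : ℝ} (hs : 0 ≤ s) :
    IntervalIntegrable (fun u => (√u)⁻¹) volume 0 s := by
  refine (intervalIntegral.intervalIntegrable_rpow' (r := -(1 / 2)) (by norm_num)).congr
    fun u hu => ?_
  rw [uIoc_of_le hs] at hu
  rw [rpow_neg hu.1.le, ← sqrt_eq_rpow]

lemma intervalIntegrable_inv_sqrt_mul {s : ℝ} {g : ℝ → ℝ} (hs : 0 ≤ s)
    (hg : ContinuousOn g (Icc 0 s)) :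
    IntervalIntegrable (fun u => (√u)⁻¹ * g u) volume 0 s :=
  (intervalIntegrable_inv_sqrt hs).mul_continuousOn (by rwa [uIcc_of_le hs])

lemma intervalIntegrable_psi (b : ℝ) {s T : ℝ} (hs : 0 ≤ s) (hsT : s < T) :
    IntervalIntegrable (psi b T) volume 0 s := by
  have hcont : ContinuousOn (fun u => exp (-b ^ 2 * u / 2) / π * psiFactor b (T - u)) (Icc 0 s) :=
    ContinuousOn.mul (by fun_prop) fun u hu =>
      ((hasDerivAt_psiFactor b (by linarith [hu.2])).continuousAt.comp
        (continuous_sub_left T).continuousAt).continuousWithinAt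
  refine (intervalIntegrable_inv_sqrt_mul hs hcont).congr fun u hu => ?_
  rw [uIoc_of_le hs] at hu
  rw [psi_eq_mul_psiFactor b (by linarith [hu.2])]
  ring

lemma intervalIntegrable_psiDerivKernel {s T : ℝ} (hs : 0 ≤ s) (hsT : s < T) :
    IntervalIntegrable (psiDerivKernel T) volume 0 s :=
  intervalIntegrable_inv_sqrt_mul hs <| ContinuousOn.inv₀ (by fun_prop) fun u hu => by
    have : 0 < T - u := by linarith [hu.2]
    positivity

lemma hasDerivAt_two_mul_sqrt_div {T u : ℝ} (hu : 0 < u) (huT : u < T) :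
    HasDerivAt (fun v => 2 * √v / (T * √(T - v))) (psiDerivKernel T u) u := by
  have hw : 0 < T - u := sub_pos.2 huT
  have hT : 0 < T := hu.trans huT
  have hden : HasDerivAt (fun v => T * √(T - v)) (T * (1 / (2 * √(T - u)) * (0 - 1))) u :=
    ((hasDerivAt_sqrt hw.ne').comp u ((hasDerivAt_const u T).sub (hasDerivAt_id u))).const_mul T
  refine (((hasDerivAt_sqrt hu.ne').const_mul 2).div hden (by positivity)).congr_deriv ?_
  have hu' : √u ^ 2 = u := sq_sqrt hu.le
  have hw' : √(T - u) ^ 2 = T - u := sq_sqrt hw.le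
  rw [psiDerivKernel]
  field_simp
  linear_combination (T - u) * hu' - u * hw'

lemma integral_psiDerivKernel {s T : ℝ} (hs : 0 ≤ s) (hsT : s < T) :
    ∫ u in 0..s, psiDerivKernel T u = 2 * √s / (T * √(T - s)) := by
  have hcont : ContinuousOn (fun v => 2 * √v / (T * √(T - v))) (Icc 0 s) :=
    ContinuousOn.div (by fun_prop) (by fun_prop) fun v hv => by
      have : 0 < T - v := by linarith [hv.2]
      have : 0 < T := by linarith [hv.1]
      positivity
  rw [intervalIntegral.integral_eq_sub_of_hasDeriv_right_of_le hs hcont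
    (fun u hu => (hasDerivAt_two_mul_sqrt_div hu.1 (hu.2.trans hsT)).hasDerivWithinAt)
    (intervalIntegrable_psiDerivKernel hs hsT)]
  simp

lemma psiDerivKernel_le {T u r : ℝ} (hr : 0 < r) (hrT : r ≤ T - u) :
    psiDerivKernel T u ≤ (r * √r)⁻¹ * (√u)⁻¹ := by
  rw [psiDerivKernel, mul_comm]
  gcongr
  linarith

lemma norm_exp_mul_psiDerivKernel_le (b : ℝ) {T u r : ℝ} (hu : 0 < u) (hr : 0 < r)
    (hrT : r ≤ T - u) :
    ‖-(exp (-b ^ 2 * T / 2) / (2 * π)) * psiDerivKernel T u‖ ≤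
      (2 * π)⁻¹ * (r * √r)⁻¹ * (√u)⁻¹ := by
  have hK : 0 ≤ psiDerivKernel T u := by
    have : 0 < T - u := hr.trans_le hrT
    rw [psiDerivKernel]
    positivity
  have hT : 0 ≤ T := by linarith
  have hexp : exp (-b ^ 2 * T / 2) ≤ 1 :=
    exp_le_one_iff.2 (by nlinarith [mul_nonneg (sq_nonneg b) hT])
  rw [norm_mul, norm_neg, norm_of_nonneg (by positivity), norm_of_nonneg hK, mul_assoc,
    div_eq_mul_inv, mul_comm (exp _)]
  exact mul_le_mul (mul_le_of_le_one_right (by positivity) hexp) (psiDerivKernel_le hr hrT) hK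
    (by positivity)

lemma hasDerivAt_integral_psi (b : ℝ) {s t : ℝ} (hs : 0 ≤ s) (ht : 0 < t) :
    HasDerivAt (fun t' => ∫ y in 0..s, psi b (s + t') y)
      (∫ y in 0..s, -(exp (-b ^ 2 * (s + t) / 2) / (2 * π)) * psiDerivKernel (s + t) y) t := by
  have hgap : ∀ y ≤ s, ∀ x ∈ Metric.ball t (t / 2), t / 2 ≤ s + x - y := by
    intro y hy x hx
    linarith [(abs_lt.1 (mem_ball_iff_norm.1 hx)).1]
  refine (intervalIntegral.hasDerivAt_integral_of_dominated_loc_of_deriv_le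
    (F := fun t' y => psi b (s + t') y)
    (F' := fun t' y => -(exp (-b ^ 2 * (s + t') / 2) / (2 * π)) * psiDerivKernel (s + t') y)
    (bound := fun y => (2 * π)⁻¹ * (t / 2 * √(t / 2))⁻¹ * (√y)⁻¹)
    (Metric.ball_mem_nhds t (half_pos ht)) ?_
    (intervalIntegrable_psi b hs (lt_add_of_pos_right s ht)) ?_
    (ae_of_all _ ?_) ((intervalIntegrable_inv_sqrt hs).const_mul _) (ae_of_all _ ?_)).2
  · exact (eventually_gt_nhds ht).mono fun x hx =>
      (intervalIntegrable_iff.1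
        (intervalIntegrable_psi b hs (lt_add_of_pos_right s hx))).aestronglyMeasurable
  · exact (intervalIntegrable_iff.1 ((intervalIntegrable_psiDerivKernel hs
      (lt_add_of_pos_right s ht)).const_mul _)).aestronglyMeasurable
  · intro y hy x hx
    rw [uIoc_of_le hs] at hy
    exact norm_exp_mul_psiDerivKernel_le b hy.1 (half_pos ht) (hgap y hy.2 x hx)
  · intro y hy x hx
    rw [uIoc_of_le hs] at hy
    exact (hasDerivAt_psi_fst b (by linarith [hgap y hy.2 x hx])).comp_const_add s x

theorem stmt3 (b s : ℝ) (hs : 0 < s) (t : ℝ) (ht : 0 < t) :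
    HasDerivAt (fun t' => ∫ y in (0 : ℝ)..s, psi b (s + t') y)
      (-(Real.exp (-b ^ 2 * (s + t) / 2) * Real.sqrt s / (π * (s + t) * Real.sqrt t))) t := by
  refine (hasDerivAt_integral_psi b hs.le ht).congr_deriv ?_
  rw [intervalIntegral.integral_const_mul, integral_psiDerivKernel hs.le (by linarith),
    add_sub_cancel_left]
  field_simp
end

section
/- Let a, x ∈ ℝ with x < a. Then ∫₀^∞ (1/(πt)) · [ ∫₀^t ((a−x)/(√(2π)·s·√(t−s))) · e^{−(a−x)²/(2s)} ds ] dt = 1. (That is, in the driftless case b = 0, the density f_{τ₂}(t) = (1/(πt)) ∫₀^t (|a−x|/(√(2π) s √(t−s))) e^{−(a−x)²/(2s)} ds of the second passage time of Brownian motion through the level a is non-defective.) -/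
open Real MeasureTheory Set Filter

/-!
The integrand is `f₂(t) = ∫₀ᵗ f₁(s) k(s, t) ds`, where `f₁ = invGaussPdf a x 0` is the Lévy
first-passage density and `k(s, t) = √s / (π t √(t - s))`. For fixed `s > 0`, `k(s, ·)` is a
probability density on `(s, ∞)`, with antiderivative `(2/π) arctan √((t - s)/s)`; the substitution
`s = u⁻²` turns `∫₀^∞ f₁` into a Gaussian integral equal to `1`. Tonelli on the triangle
`0 < s < t` then gives total mass `1`.
-/

open scoped Topology ENNReal

lemma lintegral_ofReal_eq_one_of_integral_eq_one {α : Type*} [MeasurableSpace α] {μ : Measure α}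
    {f : α → ℝ} (hf : 0 ≤ᵐ[μ] f) (h : ∫ x, f x ∂μ = 1) :
    ∫⁻ x, ENNReal.ofReal (f x) ∂μ = 1 := by
  rw [← ofReal_integral_eq_lintegral_ofReal (.of_integral_ne_zero (by simp [h])) hf, h,
    ENNReal.ofReal_one]

section Triangle

variable {μ : Measure ℝ} [SFinite μ] {f : ℝ → ℝ → ℝ≥0∞}

lemma measurable_lintegral_Ioo (hf : Measurable (Function.uncurry f)) (a : ℝ) :
    Measurable fun t => ∫⁻ s in Ioo a t, f s t ∂μ := by
  have hS : MeasurableSet {p : ℝ × ℝ | a < p.2 ∧ p.2 < p.1} :=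
    (measurableSet_lt measurable_const measurable_snd).inter
      (measurableSet_lt measurable_snd measurable_fst)
  have hind := (hf.comp measurable_swap).indicator hS
  convert hind.lintegral_prod_right' (ν := μ) using 2 with t
  rw [← lintegral_indicator measurableSet_Ioo]
  simp [indicator_apply, Function.uncurry]

lemma lintegral_Ioi_lintegral_Ioo_swap (hf : Measurable (Function.uncurry f)) (a : ℝ) :
    ∫⁻ t in Ioi a, ∫⁻ s in Ioo a t, f s t ∂μ ∂μ = ∫⁻ s in Ioi a, ∫⁻ t in Ioi s, f s t ∂μ ∂μ := by
  have hlower : ∀ t, ∫⁻ s in Ioo a t, f s t ∂μ = ∫⁻ s in Ioi a, (Iio t).indicator (f · t) s ∂μ :=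
    fun t => by rw [lintegral_indicator measurableSet_Iio, Measure.restrict_restrict
      measurableSet_Iio, Iio_inter_Ioi]
  have hupper : ∀ s ∈ Ioi a,
      ∫⁻ t in Ioi s, f s t ∂μ = ∫⁻ t in Ioi a, (Ioi s).indicator (f s) t ∂μ := fun s hs => by
    rw [lintegral_indicator measurableSet_Ioi, Measure.restrict_restrict measurableSet_Ioi,
      inter_eq_self_of_subset_left (Ioi_subset_Ioi (le_of_lt hs))]
  have hmeas : Measurable (Function.uncurry fun t s => (Iio t).indicator (f · t) s) :=
    (hf.comp measurable_swap).indicator (measurableSet_lt measurable_snd measurable_fst)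
  rw [lintegral_congr hlower, setLIntegral_congr_fun measurableSet_Ioi hupper,
    lintegral_lintegral_swap hmeas.aemeasurable]
  simp only [indicator_apply, mem_Iio, mem_Ioi]

end Triangle

-- The left factor is the Jacobian `|p| * u ^ (p - 1)` of `integral_comp_rpow_Ioi` at `p = -2`.
lemma invGaussPdf_zero_drift_rpow_neg_two {a x u : ℝ} (hu : 0 < u) :
    2 * u ^ (-2 - 1 : ℝ) * invGaussPdf a x 0 (u ^ (-2 : ℝ)) =
      2 * |a - x| / √(2 * π) * exp (-((a - x) ^ 2 / 2) * u ^ 2) := by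
  have h32 : (u ^ (-2 : ℝ)) ^ ((3 : ℝ) / 2) = u ^ (-2 - 1 : ℝ) := by
    rw [← rpow_mul hu.le]; norm_num
  have hsqrt : √(u ^ (-2 : ℝ)) = u⁻¹ := by
    rw [sqrt_eq_rpow, ← rpow_mul hu.le, ← rpow_neg_one]; norm_num
  rw [invGaussPdf, gaussPdf, h32, hsqrt]
  field_simp
  ring_nf

lemma integral_invGaussPdf_zero_drift {a x : ℝ} (h : x ≠ a) :
    ∫ s in Ioi 0, invGaussPdf a x 0 s = 1 := by
  have hc : 0 < |a - x| := abs_pos.2 (sub_ne_zero.2 h.symm)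
  have hsubst : ∫ u in Ioi 0, (|(-2 : ℝ)| * u ^ (-2 - 1 : ℝ)) • invGaussPdf a x 0 (u ^ (-2 : ℝ)) =
      ∫ u in Ioi 0, 2 * |a - x| / √(2 * π) * exp (-((a - x) ^ 2 / 2) * u ^ 2) :=
    setIntegral_congr_fun measurableSet_Ioi fun u hu => by
      rw [smul_eq_mul, abs_neg, abs_two]; exact invGaussPdf_zero_drift_rpow_neg_two hu
  rw [← integral_comp_rpow_Ioi _ (by norm_num : (-2 : ℝ) ≠ 0), hsubst,
    integral_const_mul, integral_gaussian_Ioi, div_div_eq_mul_div, ← sq_abs (a - x),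
    sqrt_div' _ (sq_nonneg _), sqrt_sq hc.le]
  field_simp

noncomputable def secondPassageKernel (s t : ℝ) : ℝ := √s / (π * t * √(t - s))

lemma hasDerivAt_arctan_sqrt_sub_div {s t : ℝ} (hs : 0 < s) (ht : s < t) :
    HasDerivAt (fun t => 2 / π * arctan (√(t - s) / √s)) (secondPassageKernel s t) t := by
  have hts : 0 < t - s := sub_pos.2 ht
  have hsqrt : HasDerivAt (fun t => √(t - s)) (1 / (2 * √(t - s))) t := by
    simpa using ((hasDerivAt_id t).sub_const s).sqrt hts.ne'
  refine (((hsqrt.div_const √s).arctan).const_mul (2 / π)).congr_deriv ?_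
  have hs' : √s ^ 2 = s := sq_sqrt hs.le
  have hts' : √(t - s) ^ 2 = t - s := sq_sqrt hts.le
  rw [secondPassageKernel, div_pow, hs', hts']
  field_simp
  rw [hs', add_sub_cancel, mul_div_cancel_left₀ _ (hs.trans ht).ne']

lemma integral_secondPassageKernel {s : ℝ} (hs : 0 < s) :
    ∫ t in Ioi s, secondPassageKernel s t = 1 := by
  have hlim : Tendsto (fun t => 2 / π * arctan (√(t - s) / √s)) atTop (𝓝 (2 / π * (π / 2))) :=
    ((tendsto_arctan_atTop.mono_right nhdsWithin_le_nhds).comp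
      (((tendsto_sqrt_atTop.comp (tendsto_atTop_add_const_right _ _ tendsto_id)).atTop_div_const
        (sqrt_pos.2 hs)))).const_mul _
  rw [integral_Ioi_of_hasDerivAt_of_nonneg (by fun_prop)
    (fun t ht => hasDerivAt_arctan_sqrt_sub_div hs ht) (fun t ht => ?_) hlim]
  · simp [pi_ne_zero]
  · have : 0 < t := hs.trans ht
    unfold secondPassageKernel; positivity

lemma invGaussPdf_nonneg (a x b : ℝ) {s : ℝ} (hs : 0 ≤ s) : 0 ≤ invGaussPdf a x b s :=
  mul_nonneg (div_nonneg (abs_nonneg _) (rpow_nonneg hs _)) (by unfold gaussPdf; positivity)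

lemma secondPassageKernel_nonneg (s : ℝ) {t : ℝ} (ht : 0 ≤ t) : 0 ≤ secondPassageKernel s t :=
  div_nonneg (sqrt_nonneg _) (mul_nonneg (mul_nonneg pi_pos.le ht) (sqrt_nonneg _))

lemma measurable_invGaussPdf_mul_secondPassageKernel (a x b : ℝ) :
    Measurable (Function.uncurry fun s t => invGaussPdf a x b s * secondPassageKernel s t) := by
  unfold invGaussPdf gaussPdf secondPassageKernel; fun_prop

lemma invGaussPdf_mul_secondPassageKernel (a x : ℝ) {s : ℝ} (hs : 0 < s) (t : ℝ) :
    invGaussPdf a x 0 s * secondPassageKernel s t =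
      1 / (π * t) * (|a - x| / (√(2 * π) * s * √(t - s)) * exp (-(a - x) ^ 2 / (2 * s))) := by
  have h32 : s ^ ((3 : ℝ) / 2) = s * √s := by
    rw [sqrt_eq_rpow, ← rpow_one_add' hs.le (by norm_num)]; norm_num
  rw [invGaussPdf, gaussPdf, secondPassageKernel, h32, zero_mul, add_zero, div_pow, sq_sqrt hs.le]
  field_simp

lemma lintegral_lintegral_invGaussPdf_mul_secondPassageKernel {a x : ℝ} (h : x ≠ a) :
    ∫⁻ t in Ioi 0, ∫⁻ s in Ioo 0 t,
      ENNReal.ofReal (invGaussPdf a x 0 s * secondPassageKernel s t) = 1 := by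
  have hmeas : Measurable (Function.uncurry fun s t =>
      ENNReal.ofReal (invGaussPdf a x 0 s * secondPassageKernel s t)) :=
    (measurable_invGaussPdf_mul_secondPassageKernel a x 0).ennreal_ofReal
  have hinner : ∀ s ∈ Ioi (0 : ℝ), ∫⁻ t in Ioi s,
      ENNReal.ofReal (invGaussPdf a x 0 s * secondPassageKernel s t) =
        ENNReal.ofReal (invGaussPdf a x 0 s) := fun s (hs : 0 < s) => by
    have hk : ∫⁻ t in Ioi s, ENNReal.ofReal (secondPassageKernel s t) = 1 :=
      lintegral_ofReal_eq_one_of_integral_eq_one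
        ((ae_restrict_iff' measurableSet_Ioi).2 (.of_forall fun t (ht : s < t) =>
          secondPassageKernel_nonneg s (hs.trans ht).le))
        (integral_secondPassageKernel hs)
    simp_rw [ENNReal.ofReal_mul (invGaussPdf_nonneg a x 0 hs.le)]
    rw [lintegral_const_mul' _ _ ENNReal.ofReal_ne_top, hk, mul_one]
  rw [lintegral_Ioi_lintegral_Ioo_swap hmeas, setLIntegral_congr_fun measurableSet_Ioi hinner]
  exact lintegral_ofReal_eq_one_of_integral_eq_one
    ((ae_restrict_iff' measurableSet_Ioi).2 (.of_forall fun s (hs : 0 < s) =>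
      invGaussPdf_nonneg a x 0 hs.le))
    (integral_invGaussPdf_zero_drift h)

noncomputable def secondPassagePdf (a x t : ℝ) : ℝ :=
  1 / (π * t) * ∫ s in (0 : ℝ)..t,
    |a - x| / (√(2 * π) * s * √(t - s)) * exp (-(a - x) ^ 2 / (2 * s))

lemma secondPassagePdf_eq_toReal_lintegral (a x : ℝ) {t : ℝ} (ht : 0 < t) :
    secondPassagePdf a x t =
      (∫⁻ s in Ioo 0 t, ENNReal.ofReal (invGaussPdf a x 0 s * secondPassageKernel s t)).toReal := by
  have hnonneg : 0 ≤ᵐ[volume.restrict (Ioo 0 t)]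
      fun s => invGaussPdf a x 0 s * secondPassageKernel s t :=
    (ae_restrict_iff' measurableSet_Ioo).2 (.of_forall fun s hs =>
      mul_nonneg (invGaussPdf_nonneg a x 0 hs.1.le) (secondPassageKernel_nonneg s ht.le))
  have hmeas : Measurable fun s => invGaussPdf a x 0 s * secondPassageKernel s t :=
    (measurable_invGaussPdf_mul_secondPassageKernel a x 0).comp measurable_prodMk_right
  rw [secondPassagePdf, ← intervalIntegral.integral_const_mul,
    intervalIntegral.integral_of_le ht.le, integral_Ioc_eq_integral_Ioo,
    setIntegral_congr_fun measurableSet_Ioo fun s hs =>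
      (invGaussPdf_mul_secondPassageKernel a x hs.1 t).symm]
  exact integral_eq_lintegral_of_nonneg_ae hnonneg hmeas.aestronglyMeasurable

lemma integral_secondPassagePdf {a x : ℝ} (h : x ≠ a) :
    ∫ t in Ioi 0, secondPassagePdf a x t = 1 := by
  have hmeas := measurable_lintegral_Ioo (μ := volume)
    (f := fun s t => ENNReal.ofReal (invGaussPdf a x 0 s * secondPassageKernel s t))
    (measurable_invGaussPdf_mul_secondPassageKernel a x 0).ennreal_ofReal 0
  have htotal := lintegral_lintegral_invGaussPdf_mul_secondPassageKernel h
  rw [setIntegral_congr_fun measurableSet_Ioi fun t ht =>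
      secondPassagePdf_eq_toReal_lintegral a x ht,
    integral_toReal hmeas.aemeasurable (ae_lt_top hmeas (by simp [htotal])), htotal,
    ENNReal.toReal_one]

theorem stmt12 (a x : ℝ) (h : x < a) :
    ∫ t in Set.Ioi (0 : ℝ), (1 / (π * t)) *
        ∫ s in (0 : ℝ)..t, ((a - x) / (Real.sqrt (2 * π) * s * Real.sqrt (t - s))) *
          Real.exp (-(a - x) ^ 2 / (2 * s)) = 1 := by
  simpa only [secondPassagePdf, abs_of_pos (sub_pos.2 h)] using integral_secondPassagePdf h.ne
end

section
/- Let a, x, b ∈ ℝ with x ≠ a and (a−x)·b ≤ 0, and let f_{τ₁}(s) = (|a−x|/s^{3/2}) φ((a + bs − x)/√s). Define f_{T₂}(t) = ∫₀^∞ f_{τ₁}(s) · e^{−b²(s+t)/2} · √s/(π·√t·(s+t)) ds for t > 0. Then lim_{t → 0⁺} √t · f_{T₂}(t) = (1/π) ∫₀^∞ f_{τ₁}(s) · e^{−b²s/2} / √s ds; in particular f_{T₂}(t) ∼ C/√t as t → 0⁺ with constant C = (1/π) ∫₀^∞ f_{τ₁}(s) e^{−b²s/2} s^{−1/2} ds.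 -/
open Real MeasureTheory Set Filter

theorem hInt {c : ℝ} (hc : 0 < c) :
    IntegrableOn (fun s => Real.exp (-c/s) / s^2) (Ioi (0:ℝ)) := by
  have hmeas : ∀ u : Set ℝ, AEStronglyMeasurable (fun s : ℝ => Real.exp (-c/s) / s^2)
      (volume.restrict u) := by
    intro u
    apply Measurable.aestronglyMeasurable
    fun_prop
  have key : ∀ s : ℝ, 0 < s → Real.exp (-c/s) / s^2 ≤ 4 / c^2 := by
    intro s hs
    have h1 : c/(2*s) ≤ Real.exp (c/(2*s)) := by
      linarith [Real.add_one_le_exp (c/(2*s))]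
    have h3 : c^2/(4*s^2) ≤ Real.exp (c/s) := by
      calc c^2/(4*s^2) = (c/(2*s))^2 := by ring
        _ ≤ Real.exp (c/(2*s))^2 := pow_le_pow_left₀ (by positivity) h1 2
        _ = Real.exp (c/s) := by
            rw [← Real.exp_nat_mul]; norm_num; ring_nf
    have h4 : Real.exp (-c/s) ≤ 4*s^2/c^2 := by
      rw [neg_div, Real.exp_neg]
      calc (Real.exp (c/s))⁻¹ ≤ (c^2/(4*s^2))⁻¹ :=
            inv_anti₀ (by positivity) h3
        _ = 4*s^2/c^2 := by field_simp
    calc Real.exp (-c/s) / s^2 ≤ (4*s^2/c^2) / s^2 := by gcongr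
      _ = 4/c^2 := by field_simp
  have h01 : IntegrableOn (fun s => Real.exp (-c/s) / s^2) (Ioc (0:ℝ) 1) := by
    apply Integrable.mono' (integrable_const (4/c^2)) (hmeas _)
    filter_upwards [ae_restrict_mem measurableSet_Ioc] with s hs
    rw [Real.norm_eq_abs, abs_of_nonneg (by positivity)]
    exact key s hs.1
  have h1i : IntegrableOn (fun s => Real.exp (-c/s) / s^2) (Ioi (1:ℝ)) := by
    apply Integrable.mono' (integrableOn_Ioi_rpow_of_lt (by norm_num : (-2:ℝ) < -1) one_pos) (hmeas _)
    filter_upwards [ae_restrict_mem measurableSet_Ioi] with s hs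
    have hs0 : (0:ℝ) < s := lt_trans one_pos hs
    rw [Real.norm_eq_abs, abs_of_nonneg (by positivity)]
    rw [Real.rpow_neg hs0.le]
    rw [show ((2:ℝ)) = ((2:ℕ):ℝ) by norm_num, Real.rpow_natCast]
    calc Real.exp (-c/s) / s^2 ≤ 1 / s^2 := by
          gcongr
          exact Real.exp_le_one_iff.mpr (div_nonpos_iff.mpr (Or.inr ⟨neg_nonpos.mpr hc.le, hs0.le⟩))
      _ = (s^2)⁻¹ := one_div _
  have := h01.union h1i
  rwa [Ioc_union_Ioi_eq_Ioi (by norm_num : (0:ℝ) ≤ 1)] at this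

set_option linter.unusedVariables false in
theorem stmt13 (a x b : ℝ) (hax : x ≠ a) (h : (a - x) * b ≤ 0) :
    Filter.Tendsto
      (fun t => Real.sqrt t * ∫ s in Set.Ioi (0 : ℝ),
          invGaussPdf a x b s * Real.exp (-b ^ 2 * (s + t) / 2) *
            Real.sqrt s / (π * Real.sqrt t * (s + t)))
      (nhdsWithin 0 (Set.Ioi 0))
      (nhds ((1 / π) * ∫ s in Set.Ioi (0 : ℝ),
          invGaussPdf a x b s * Real.exp (-b ^ 2 * s / 2) / Real.sqrt s)) := by
  have hπ : 0 < π := Real.pi_pos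
  have hd0 : a - x ≠ 0 := sub_ne_zero.mpr (Ne.symm hax)
  set d : ℝ := a - x with hd
  set c : ℝ := d^2/2 with hc'
  have hc : 0 < c := by positivity
  set K : ℝ := (|d| * Real.exp (-(d*b)) / Real.sqrt (2*π)) / π with hK
  -- bound on invGaussPdf
  have hG : ∀ s : ℝ, 0 < s → invGaussPdf a x b s ≤
      (|d| * Real.exp (-(d*b)) / Real.sqrt (2*π)) * (Real.exp (-c/s) / s ^ ((3:ℝ)/2)) := by
    intro s hs
    have hz : Real.exp (-((a + b*s - x)/Real.sqrt s)^2/2) ≤ Real.exp (-(d*b)) * Real.exp (-c/s) := by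
      rw [← Real.exp_add, Real.exp_le_exp]
      have hsq : ((a + b*s - x)/Real.sqrt s)^2 = (d + b*s)^2 / s := by
        rw [div_pow, Real.sq_sqrt hs.le, hd]; ring_nf
      rw [hsq]
      have hexp : (d + b*s)^2 / s = d^2/s + 2*(d*b) + b^2*s := by
        field_simp; ring
      have hb2 : 0 ≤ b^2*s := by positivity
      rw [hc']
      rw [hexp]
      have h1 : -(d^2/s + 2*(d*b) + b^2*s)/2 = -(d^2/(2*s)) - d*b - b^2*s/2 := by
        field_simp; ring
      rw [h1, show -(d^2/2)/s = -(d^2/(2*s)) by rw [neg_div, div_div]]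
      linarith
    unfold invGaussPdf gaussPdf
    rw [← hd]
    calc (|d| / s ^ ((3:ℝ)/2)) * ((1 / Real.sqrt (2*π)) * Real.exp (-((a + b*s - x)/Real.sqrt s)^2/2))
        ≤ (|d| / s ^ ((3:ℝ)/2)) * ((1 / Real.sqrt (2*π)) * (Real.exp (-(d*b)) * Real.exp (-c/s))) := by
          gcongr
      _ = (|d| * Real.exp (-(d*b)) / Real.sqrt (2*π)) * (Real.exp (-c/s) / s ^ ((3:ℝ)/2)) := by
          ring
  -- DCT
  have key : Tendsto (fun t => ∫ s in Ioi (0:ℝ),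
        invGaussPdf a x b s * Real.exp (-b^2*(s+t)/2) * Real.sqrt s / (π*(s+t)))
      (nhdsWithin 0 (Ioi 0))
      (nhds (∫ s in Ioi (0:ℝ),
        invGaussPdf a x b s * Real.exp (-b^2*(s+(0:ℝ))/2) * Real.sqrt s / (π*(s+(0:ℝ))))) := by
    apply tendsto_integral_filter_of_dominated_convergence
      (bound := fun s => K * (Real.exp (-c/s)/s^2))
    · filter_upwards with t
      apply Measurable.aestronglyMeasurable
      unfold invGaussPdf gaussPdf
      fun_prop
    · filter_upwards [self_mem_nhdsWithin] with t ht
      filter_upwards [ae_restrict_mem measurableSet_Ioi] with s hs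
      have ht0 : (0:ℝ) < t := ht
      have hs0 : (0:ℝ) < s := hs
      have hinvnn : 0 ≤ invGaussPdf a x b s := by
        unfold invGaussPdf gaussPdf; positivity
    
      have h32 : s ^ ((3:ℝ)/2) = s * Real.sqrt s := by
        rw [show ((3:ℝ)/2) = 1 + 1/2 by norm_num, Real.rpow_add hs0, Real.rpow_one,
          ← Real.sqrt_eq_rpow]
      have hss : Real.sqrt s * Real.sqrt s = s := Real.mul_self_sqrt hs0.le
      have hsrt : 0 < Real.sqrt s := Real.sqrt_pos.mpr hs0
      rw [Real.norm_eq_abs, abs_of_nonneg (by positivity)]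
      calc invGaussPdf a x b s * Real.exp (-b^2*(s+t)/2) * Real.sqrt s / (π*(s+t))
          ≤ ((|d| * Real.exp (-(d*b)) / Real.sqrt (2*π)) * (Real.exp (-c/s) / s ^ ((3:ℝ)/2))
              * 1 * Real.sqrt s) / (π*s) := by
            apply div_le_div₀ (by positivity) _ (by positivity) (by nlinarith)
            gcongr
            · exact hG s hs0
            · exact Real.exp_le_one_iff.mpr (by nlinarith [sq_nonneg b])
        _ = K * (Real.exp (-c/s)/s^2) := by
            rw [hK, h32]
            field_simp
    · exact (hInt hc).const_mul K
    · filter_upwards [ae_restrict_mem measurableSet_Ioi] with s hs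
      have hs0 : (0:ℝ) < s := hs
      have hcont : ContinuousAt (fun t : ℝ =>
          invGaussPdf a x b s * Real.exp (-b^2*(s+t)/2) * Real.sqrt s / (π*(s+t))) 0 := by
        apply ContinuousAt.div
        · fun_prop
        · fun_prop
        · simp only [add_zero]
          positivity
      exact hcont.tendsto.mono_left nhdsWithin_le_nhds
  -- identify the limit
  have hlim : (∫ s in Ioi (0:ℝ),
        invGaussPdf a x b s * Real.exp (-b^2*(s+(0:ℝ))/2) * Real.sqrt s / (π*(s+(0:ℝ))))
      = (1/π) * ∫ s in Ioi (0:ℝ),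
        invGaussPdf a x b s * Real.exp (-b^2*s/2) / Real.sqrt s := by
    rw [← integral_const_mul]
    apply setIntegral_congr_fun measurableSet_Ioi
    intro s hs
    have hs0 : (0:ℝ) < s := hs
    have hss : Real.sqrt s * Real.sqrt s = s := Real.mul_self_sqrt hs0.le
    have hsrt : 0 < Real.sqrt s := Real.sqrt_pos.mpr hs0
    simp only [add_zero]
    rw [show (1:ℝ)/π * (invGaussPdf a x b s * Real.exp (-b^2*s/2) / Real.sqrt s)
        = invGaussPdf a x b s * Real.exp (-b^2*s/2) / (π * Real.sqrt s) by ring]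
    rw [div_eq_div_iff (by positivity) (by positivity)]
    linear_combination (invGaussPdf a x b s * Real.exp (-b^2*s/2) * π) * hss
  rw [← hlim]
  apply key.congr'
  filter_upwards [self_mem_nhdsWithin] with t ht
  have ht0 : (0:ℝ) < t := ht
  have htrt : 0 < Real.sqrt t := Real.sqrt_pos.mpr ht0
  rw [← integral_const_mul]
  apply setIntegral_congr_fun measurableSet_Ioi
  intro s hs
  have hs0 : (0:ℝ) < s := hs
  have hst : 0 < s + t := by linarith
  field_simp
end
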